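/- Fix α > 0 and an integer n ≥ 2. If the function g := g₁/g₂ is surjective from (0, ∞) onto (0, ∞) and strictly decreasing on (0, ∞), then the discrete system (S) with parameter α has exactly one positive solution (u₁, …, u_n) ∈ (0, ∞)ⁿ. -/

import Mathlib

/-!
Shooting from `u 1 = a`: the recursion forces `u k = U g1 h k a`, and the boundary condition
becomes `Ψ a = h α` with `Ψ a = ((U_n - U_{n-1}) / g₁(U_n) + h² / 2) · g(U_n)`.
The second factor is strictly decreasing in `a` because `U_n` increases with `a` and `g`
decreases. So is the first: with `U'` the derivative of `U` in `a`, its derivative has the sign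
of `-X_{n-1}`, where `X_m = g₁'(U_{m+1}) U'_{m+1} (U_{m+1} - U_m) - g₁(U_{m+1}) (U'_{m+1} - U'_m)`,
and the recursion gives `X_1 = δ_1`, `X_{m+1} = X_m + δ_{m+1}` with increments `δ_m` that are
positive by strict convexity of `g₁`. Hence `Ψ` is injective. Finally
`(h² / 2) g(U_n) ≤ Ψ ≤ h g(U_n)`, so the surjectivity of `g` makes `Ψ` exceed `h α` near `0` and
fall below it for large `a`, and the intermediate value theorem gives a solution.
-/

open Finset

noncomputable def U (g1 : ℝ → ℝ) (h : ℝ) : ℕ → ℝ → ℝ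
  | 0, u => u
  | 1, u => u
  | 2, u => u + h ^ 2 / 2 * g1 u
  | k + 3, u => 2 * U g1 h (k + 2) u - U g1 h (k + 1) u + h ^ 2 * g1 (U g1 h (k + 2) u)

/-- `(α, u 1, …, u n)` is a positive solution of the discrete system (S). -/
def IsSolution (g1 g2 : ℝ → ℝ) (n : ℕ) (h α : ℝ) (u : ℕ → ℝ) : Prop :=
  (∀ k, 1 ≤ k → k ≤ n → 0 < u k) ∧
  u 2 - u 1 = h ^ 2 / 2 * g1 (u 1) ∧
  (∀ k, 2 ≤ k → k ≤ n - 1 → u (k + 1) - 2 * u k + u (k - 1) = h ^ 2 * g1 (u k)) ∧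
  u n - u (n - 1) + h ^ 2 / 2 * g1 (u n) = h * α * g2 (u n)

open Filter Topology

noncomputable def U' (g1 : ℝ → ℝ) (h : ℝ) : ℕ → ℝ → ℝ
  | 0, _ => 1
  | 1, _ => 1
  | 2, u => 1 + h ^ 2 / 2 * deriv g1 u
  | k + 3, u => 2 * U' g1 h (k + 2) u - U' g1 h (k + 1) u
      + h ^ 2 * (deriv g1 (U g1 h (k + 2) u) * U' g1 h (k + 2) u)

theorem pos_of_deriv_pos {f : ℝ → ℝ} (hf : Continuous f) (hf0 : f 0 = 0)
    (hf' : ∀ x > 0, 0 < deriv f x) : ∀ x > 0, 0 < f x := fun x hx =>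
  hf0 ▸ strictMonoOn_of_deriv_pos (convex_Ici 0) hf.continuousOn
    (by rwa [interior_Ici]) Set.self_mem_Ici hx.le hx

theorem le_and_lt_succ_of_sub_le_sub {s : ℕ → ℝ} (h12 : s 1 < s 2)
    (hinc : ∀ m, 1 ≤ m → s 1 ≤ s (m + 1) → s (m + 1) - s m ≤ s (m + 2) - s (m + 1)) :
    ∀ m, 1 ≤ m → s 1 ≤ s m ∧ s m < s (m + 1) := by
  intro m hm
  induction m, hm using Nat.le_induction with
  | base => exact ⟨le_rfl, h12⟩
  | succ m hm ih =>
    have hle : s 1 ≤ s (m + 1) := ih.1.trans ih.2.le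
    exact ⟨hle, by linarith [hinc m hm hle, ih.2]⟩

theorem StrictConvexOn.mul_sub_lt_mul_sub_deriv_mul {f : ℝ → ℝ}
    (hf : StrictConvexOn ℝ (Set.Ioi 0) f) (hfd : Differentiable ℝ f) {x y v w : ℝ}
    (hx : 0 < x) (hxy : x < y) (hv : 0 < v) (hvw : v < w) :
    (w - v) * (f y - f x) < (y - x) * (deriv f y * w - deriv f x * v) := by
  have hy : y ∈ Set.Ioi (0 : ℝ) := hx.trans hxy
  have hslope : f y - f x < deriv f y * (y - x) := by
    have := hf.slope_lt_deriv hx hy hxy (hfd y)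
    rwa [slope_def_field, div_lt_iff₀ (sub_pos.2 hxy)] at this
  have hderiv : deriv f x < deriv f y :=
    hf.strictMonoOn_deriv (fun z _ => hfd z) hx hy hxy
  nlinarith [mul_lt_mul_of_pos_left hslope (sub_pos.2 hvw),
    mul_lt_mul_of_pos_right hderiv hv, sub_pos.2 hxy]

section Shooting

variable {g1 : ℝ → ℝ} {h : ℝ}

theorem U_two (x : ℝ) : U g1 h 2 x = x + h ^ 2 / 2 * g1 x := rfl

theorem U_add_two {m : ℕ} (hm : 1 ≤ m) (x : ℝ) :
    U g1 h (m + 2) x = 2 * U g1 h (m + 1) x - U g1 h m x + h ^ 2 * g1 (U g1 h (m + 1) x) := by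
  obtain ⟨j, rfl⟩ := Nat.exists_eq_add_of_le' hm
  rfl

theorem U'_two (x : ℝ) : U' g1 h 2 x = 1 + h ^ 2 / 2 * deriv g1 x := rfl

theorem U'_add_two {m : ℕ} (hm : 1 ≤ m) (x : ℝ) :
    U' g1 h (m + 2) x = 2 * U' g1 h (m + 1) x - U' g1 h m x
      + h ^ 2 * (deriv g1 (U g1 h (m + 1) x) * U' g1 h (m + 1) x) := by
  obtain ⟨j, rfl⟩ := Nat.exists_eq_add_of_le' hm
  rfl

theorem hasDerivAt_U (hg1 : Differentiable ℝ g1) :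
    ∀ (m : ℕ) (a : ℝ), HasDerivAt (U g1 h m) (U' g1 h m a) a
  | 0, a => hasDerivAt_id a
  | 1, a => hasDerivAt_id a
  | 2, a => (hasDerivAt_id a).add ((hg1 a).hasDerivAt.const_mul (h ^ 2 / 2))
  | j + 3, a => (((hasDerivAt_U hg1 (j + 2) a).const_mul 2).sub (hasDerivAt_U hg1 (j + 1) a)).add
      (((hg1 _).hasDerivAt.comp a (hasDerivAt_U hg1 (j + 2) a)).const_mul (h ^ 2))

theorem U_apply_zero (hg10 : g1 0 = 0) : ∀ m : ℕ, U g1 h m 0 = 0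
  | 0 | 1 => rfl
  | 2 => by simp [U_two, hg10]
  | j + 3 => by
    change 2 * U g1 h (j + 2) 0 - U g1 h (j + 1) 0 + h ^ 2 * g1 (U g1 h (j + 2) 0) = 0
    simp [U_apply_zero hg10 (j + 2), U_apply_zero hg10 (j + 1), hg10]

variable {a : ℝ}

theorem le_U_and_U_lt_U_succ (hg1_pos : ∀ x > 0, 0 < g1 x) (hh : h ≠ 0) (ha : 0 < a) :
    ∀ m, 1 ≤ m → a ≤ U g1 h m a ∧ U g1 h m a < U g1 h (m + 1) a := by
  have hh2 : 0 < h ^ 2 := by positivity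
  refine le_and_lt_succ_of_sub_le_sub (s := fun m => U g1 h m a) ?_ fun m hm hle => ?_
  · change a < a + h ^ 2 / 2 * g1 a
    have := mul_pos hh2 (hg1_pos a ha)
    linarith
  · have := mul_pos hh2 (hg1_pos _ (ha.trans_le hle))
    simp only [U_add_two hm]
    linarith

theorem U_pos (hg1_pos : ∀ x > 0, 0 < g1 x) (hh : h ≠ 0) (ha : 0 < a) {m : ℕ} (hm : 1 ≤ m) :
    0 < U g1 h m a :=
  ha.trans_le (le_U_and_U_lt_U_succ hg1_pos hh ha m hm).1

theorem one_le_U'_and_U'_lt_U'_succ (hg1_pos : ∀ x > 0, 0 < g1 x)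
    (hg1'_pos : ∀ x > 0, 0 < deriv g1 x) (hh : h ≠ 0) (ha : 0 < a) :
    ∀ m, 1 ≤ m → 1 ≤ U' g1 h m a ∧ U' g1 h m a < U' g1 h (m + 1) a := by
  have hh2 : 0 < h ^ 2 := by positivity
  refine le_and_lt_succ_of_sub_le_sub (s := fun m => U' g1 h m a) ?_ fun m hm hle => ?_
  · change 1 < 1 + h ^ 2 / 2 * deriv g1 a
    have := mul_pos hh2 (hg1'_pos a ha)
    linarith
  · change (1 : ℝ) ≤ _ at hle
    have := mul_pos hh2 (mul_pos (hg1'_pos _ (U_pos hg1_pos hh ha (m := m + 1) (by omega)))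
      (one_pos.trans_le hle))
    simp only [U'_add_two hm]
    linarith

theorem U'_sub_mul_g1_lt (hg1 : Differentiable ℝ g1) (hg1_pos : ∀ x > 0, 0 < g1 x)
    (hg1'_pos : ∀ x > 0, 0 < deriv g1 x) (hg1_conv : StrictConvexOn ℝ (Set.Ioi 0) g1)
    (hh : h ≠ 0) (ha : 0 < a) :
    ∀ m, 1 ≤ m → (U' g1 h (m + 1) a - U' g1 h m a) * g1 (U g1 h (m + 1) a)
      < (U g1 h (m + 1) a - U g1 h m a) * (deriv g1 (U g1 h (m + 1) a) * U' g1 h (m + 1) a) := by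
  have hU := le_U_and_U_lt_U_succ hg1_pos hh ha
  have hU' := one_le_U'_and_U'_lt_U'_succ hg1_pos hg1'_pos hh ha
  have hstep : ∀ m, 1 ≤ m →
      (U' g1 h (m + 1) a - U' g1 h m a) * (g1 (U g1 h (m + 1) a) - g1 (U g1 h m a))
        < (U g1 h (m + 1) a - U g1 h m a) * (deriv g1 (U g1 h (m + 1) a) * U' g1 h (m + 1) a
          - deriv g1 (U g1 h m a) * U' g1 h m a) := fun m hm =>
    hg1_conv.mul_sub_lt_mul_sub_deriv_mul hg1 (ha.trans_le (hU m hm).1) (hU m hm).2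
      (one_pos.trans_le (hU' m hm).1) (hU' m hm).2
  intro m hm
  induction m, hm using Nat.le_induction with
  | base =>
    have := hstep 1 le_rfl
    change (U' g1 h 2 a - 1) * (g1 (U g1 h 2 a) - g1 a)
      < (U g1 h 2 a - a) * (deriv g1 (U g1 h 2 a) * U' g1 h 2 a - deriv g1 a * 1) at this
    change (U' g1 h 2 a - 1) * g1 (U g1 h 2 a) < (U g1 h 2 a - a) * _
    rw [U_two, U'_two] at this ⊢
    linear_combination this
  | succ m hm ih =>
    have := hstep (m + 1) (by omega)
    rw [show m + 1 + 1 = m + 2 from rfl, U_add_two hm, U'_add_two hm] at this ⊢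
    linear_combination this + ih

theorem strictMonoOn_U (hg1 : Differentiable ℝ g1) (hg1_pos : ∀ x > 0, 0 < g1 x)
    (hg1'_pos : ∀ x > 0, 0 < deriv g1 x) (hh : h ≠ 0) {m : ℕ} (hm : 1 ≤ m) :
    StrictMonoOn (U g1 h m) (Set.Ioi 0) := by
  refine strictMonoOn_of_deriv_pos (convex_Ioi 0)
    (fun a _ => (hasDerivAt_U hg1 m a).continuousAt.continuousWithinAt) fun a ha => ?_
  rw [interior_Ioi] at ha
  rw [(hasDerivAt_U hg1 m a).deriv]
  exact one_pos.trans_le (one_le_U'_and_U'_lt_U'_succ hg1_pos hg1'_pos hh ha m hm).1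

theorem strictAntiOn_U_sub_div (hg1 : Differentiable ℝ g1) (hg1_pos : ∀ x > 0, 0 < g1 x)
    (hg1'_pos : ∀ x > 0, 0 < deriv g1 x) (hg1_conv : StrictConvexOn ℝ (Set.Ioi 0) g1)
    (hh : h ≠ 0) {m : ℕ} (hm : 1 ≤ m) :
    StrictAntiOn (fun a => (U g1 h (m + 1) a - U g1 h m a) / g1 (U g1 h (m + 1) a))
      (Set.Ioi 0) := by
  have hderiv : ∀ a : ℝ, 0 < a → HasDerivAt
      (fun a => (U g1 h (m + 1) a - U g1 h m a) / g1 (U g1 h (m + 1) a))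
      (((U' g1 h (m + 1) a - U' g1 h m a) * g1 (U g1 h (m + 1) a)
        - (U g1 h (m + 1) a - U g1 h m a) * (deriv g1 (U g1 h (m + 1) a) * U' g1 h (m + 1) a))
        / g1 (U g1 h (m + 1) a) ^ 2) a := fun a ha =>
    ((hasDerivAt_U hg1 (m + 1) a).sub (hasDerivAt_U hg1 m a)).div
      ((hg1 _).hasDerivAt.comp a (hasDerivAt_U hg1 (m + 1) a))
      (hg1_pos _ (U_pos hg1_pos hh ha (by omega))).ne'
  refine strictAntiOn_of_deriv_neg (convex_Ioi 0)
    (fun a ha => (hderiv a ha).continuousAt.continuousWithinAt) fun a ha => ?_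
  rw [interior_Ioi] at ha
  rw [(hderiv a ha).deriv]
  exact div_neg_of_neg_of_pos
    (sub_neg.2 (U'_sub_mul_g1_lt hg1 hg1_pos hg1'_pos hg1_conv hh ha m hm))
    (pow_pos (hg1_pos _ (U_pos hg1_pos hh ha (by omega))) 2)

theorem U_succ_sub_U_add_le (hg1 : Differentiable ℝ g1) (hg1_pos : ∀ x > 0, 0 < g1 x)
    (hg1'_pos : ∀ x > 0, 0 < deriv g1 x) (hh : h ≠ 0) (ha : 0 < a) :
    ∀ m, 1 ≤ m → U g1 h (m + 1) a - U g1 h m a + h ^ 2 / 2 * g1 (U g1 h (m + 1) a)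
      ≤ m * h ^ 2 * g1 (U g1 h (m + 1) a) := by
  have hmono : StrictMonoOn g1 (Set.Ioi 0) :=
    strictMonoOn_of_deriv_pos (convex_Ioi 0) hg1.continuous.continuousOn
      (by rw [interior_Ioi]; exact hg1'_pos)
  have hU := le_U_and_U_lt_U_succ hg1_pos hh ha
  have hg1_le : ∀ m, 1 ≤ m → g1 (U g1 h m a) ≤ g1 (U g1 h (m + 1) a) := fun m hm =>
    (hmono (ha.trans_le (hU m hm).1) (ha.trans_le (hU (m + 1) (by omega)).1) (hU m hm).2).le
  intro m hm
  induction m, hm using Nat.le_induction with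
  | base =>
    have : h ^ 2 / 2 * g1 a ≤ h ^ 2 / 2 * g1 (U g1 h 2 a) :=
      mul_le_mul_of_nonneg_left (hg1_le 1 le_rfl) (by positivity)
    change a + h ^ 2 / 2 * g1 a - a + _ ≤ _
    push_cast
    linarith
  | succ m hm ih =>
    have : (m + 1 / 2) * h ^ 2 * g1 (U g1 h (m + 1) a)
        ≤ (m + 1 / 2) * h ^ 2 * g1 (U g1 h (m + 2) a) :=
      mul_le_mul_of_nonneg_left (hg1_le (m + 1) (by omega)) (by positivity)
    have hrec := U_add_two hm a (g1 := g1) (h := h)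
    rw [show m + 1 + 1 = m + 2 from rfl]
    push_cast at ih ⊢
    linarith

/-- Dividing the boundary condition at `k = m + 1` by `g2 (u (m + 1))` turns it into
`shootingMap g1 g2 h m (u 1) = h * α`. -/
noncomputable def shootingMap (g1 g2 : ℝ → ℝ) (h : ℝ) (m : ℕ) (a : ℝ) : ℝ :=
  ((U g1 h (m + 1) a - U g1 h m a) / g1 (U g1 h (m + 1) a) + h ^ 2 / 2) *
    (g1 (U g1 h (m + 1) a) / g2 (U g1 h (m + 1) a))

variable {g2 : ℝ → ℝ} {m : ℕ}

theorem shootingMap_strictAntiOn (hg1 : Differentiable ℝ g1) (hg1_pos : ∀ x > 0, 0 < g1 x)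
    (hg1'_pos : ∀ x > 0, 0 < deriv g1 x) (hg1_conv : StrictConvexOn ℝ (Set.Ioi 0) g1)
    (hg2_pos : ∀ x > 0, 0 < g2 x) (hdec : StrictAntiOn (fun x => g1 x / g2 x) (Set.Ioi 0))
    (hh : h ≠ 0) (hm : 1 ≤ m) :
    StrictAntiOn (shootingMap g1 g2 h m) (Set.Ioi 0) := by
  intro a ha b hb hab
  have hUb : 0 < U g1 h (m + 1) b := U_pos hg1_pos hh hb (by omega)
  have hR : (U g1 h (m + 1) b - U g1 h m b) / g1 (U g1 h (m + 1) b)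
      ≤ (U g1 h (m + 1) a - U g1 h m a) / g1 (U g1 h (m + 1) a) :=
    (strictAntiOn_U_sub_div hg1 hg1_pos hg1'_pos hg1_conv hh hm ha hb hab).le
  have hR_pos : 0 < (U g1 h (m + 1) b - U g1 h m b) / g1 (U g1 h (m + 1) b) + h ^ 2 / 2 := by
    have := (le_U_and_U_lt_U_succ hg1_pos hh hb m hm).2
    have := div_pos (sub_pos.2 this) (hg1_pos _ hUb)
    positivity
  have hG : g1 (U g1 h (m + 1) b) / g2 (U g1 h (m + 1) b)
      < g1 (U g1 h (m + 1) a) / g2 (U g1 h (m + 1) a) :=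
    hdec (U_pos hg1_pos hh ha (by omega)) hUb
      (strictMonoOn_U hg1 hg1_pos hg1'_pos hh (by omega) ha hb hab)
  have hG_pos : 0 < g1 (U g1 h (m + 1) a) / g2 (U g1 h (m + 1) a) := by
    have hUa : 0 < U g1 h (m + 1) a := U_pos hg1_pos hh ha (by omega)
    exact div_pos (hg1_pos _ hUa) (hg2_pos _ hUa)
  unfold shootingMap
  calc _ < _ := mul_lt_mul_of_pos_left hG hR_pos
    _ ≤ _ := mul_le_mul_of_nonneg_right (by linarith) hG_pos.le

theorem continuousOn_shootingMap (hg1 : Differentiable ℝ g1) (hg1_pos : ∀ x > 0, 0 < g1 x)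
    (hg2 : Continuous g2) (hg2_pos : ∀ x > 0, 0 < g2 x) (hh : h ≠ 0) :
    ContinuousOn (shootingMap g1 g2 h m) (Set.Ioi 0) := by
  intro a ha
  have hU : ∀ k, ContinuousAt (U g1 h k) a := fun k => (hasDerivAt_U hg1 k a).continuousAt
  have hUa : 0 < U g1 h (m + 1) a := U_pos hg1_pos hh ha (by omega)
  have hg1U : ContinuousAt (fun x => g1 (U g1 h (m + 1) x)) a :=
    hg1.continuous.continuousAt.comp (hU (m + 1))
  exact (((((hU (m + 1)).sub (hU m)).div hg1U (hg1_pos _ hUa).ne').add continuousAt_const).mul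
    (hg1U.div (hg2.continuousAt.comp (hU (m + 1))) (hg2_pos _ hUa).ne')).continuousWithinAt

theorem shootingMap_le (hg1 : Differentiable ℝ g1) (hg1_pos : ∀ x > 0, 0 < g1 x)
    (hg1'_pos : ∀ x > 0, 0 < deriv g1 x) (hg2_pos : ∀ x > 0, 0 < g2 x) (hh : h ≠ 0)
    (ha : 0 < a) (hm : 1 ≤ m) :
    shootingMap g1 g2 h m a ≤ m * h ^ 2 * (g1 (U g1 h (m + 1) a) / g2 (U g1 h (m + 1) a)) := by
  have hUa : 0 < U g1 h (m + 1) a := U_pos hg1_pos hh ha (by omega)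
  have hg1U := hg1_pos _ hUa
  have hR : (U g1 h (m + 1) a - U g1 h m a) / g1 (U g1 h (m + 1) a) + h ^ 2 / 2 ≤ m * h ^ 2 := by
    rw [div_add' _ _ _ hg1U.ne', div_le_iff₀ hg1U]
    linarith [U_succ_sub_U_add_le hg1 hg1_pos hg1'_pos hh ha m hm]
  exact mul_le_mul_of_nonneg_right hR (div_pos hg1U (hg2_pos _ hUa)).le

theorem le_shootingMap (hg1_pos : ∀ x > 0, 0 < g1 x) (hg2_pos : ∀ x > 0, 0 < g2 x)
    (hh : h ≠ 0) (ha : 0 < a) (hm : 1 ≤ m) :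
    h ^ 2 / 2 * (g1 (U g1 h (m + 1) a) / g2 (U g1 h (m + 1) a)) ≤ shootingMap g1 g2 h m a := by
  have hUa : 0 < U g1 h (m + 1) a := U_pos hg1_pos hh ha (by omega)
  have hD := div_pos (sub_pos.2 (le_U_and_U_lt_U_succ hg1_pos hh ha m hm).2) (hg1_pos _ hUa)
  exact mul_le_mul_of_nonneg_right (by linarith) (div_pos (hg1_pos _ hUa) (hg2_pos _ hUa)).le

theorem exists_lt_shootingMap (hg1 : Differentiable ℝ g1) (hg10 : g1 0 = 0)
    (hg1_pos : ∀ x > 0, 0 < g1 x) (hg2_pos : ∀ x > 0, 0 < g2 x)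
    (hsurj : ∀ y > (0 : ℝ), ∃ x > (0 : ℝ), g1 x / g2 x = y)
    (hdec : StrictAntiOn (fun x => g1 x / g2 x) (Set.Ioi 0)) (hh : h ≠ 0) (hm : 1 ≤ m)
    {c : ℝ} (hc : 0 < c) :
    ∃ a > 0, c < shootingMap g1 g2 h m a := by
  have hh2 : 0 < h ^ 2 := by positivity
  obtain ⟨x₀, hx₀, hgx₀⟩ := hsurj (2 * c / h ^ 2) (by positivity)
  have hlim : Tendsto (U g1 h (m + 1)) (𝓝[>] 0) (𝓝 0) := by
    simpa [U_apply_zero hg10] using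
      (hasDerivAt_U hg1 (m + 1) 0).continuousAt.tendsto.mono_left nhdsWithin_le_nhds
  obtain ⟨a, hax₀, ha⟩ := ((hlim.eventually_lt_const hx₀).and self_mem_nhdsWithin).exists
  have hG : 2 * c / h ^ 2 < g1 (U g1 h (m + 1) a) / g2 (U g1 h (m + 1) a) :=
    hgx₀ ▸ hdec (U_pos hg1_pos hh ha (by omega)) hx₀ hax₀
  refine ⟨a, ha, lt_of_lt_of_le ?_ (le_shootingMap hg1_pos hg2_pos hh ha hm)⟩
  calc c = h ^ 2 / 2 * (2 * c / h ^ 2) := by field_simp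
    _ < _ := mul_lt_mul_of_pos_left hG (by positivity)

theorem exists_shootingMap_lt (hg1 : Differentiable ℝ g1) (hg1_pos : ∀ x > 0, 0 < g1 x)
    (hg1'_pos : ∀ x > 0, 0 < deriv g1 x) (hg2_pos : ∀ x > 0, 0 < g2 x)
    (hsurj : ∀ y > (0 : ℝ), ∃ x > (0 : ℝ), g1 x / g2 x = y)
    (hdec : StrictAntiOn (fun x => g1 x / g2 x) (Set.Ioi 0)) (hh : h ≠ 0) (hm : 1 ≤ m)
    {c : ℝ} (hc : 0 < c) (ha : 0 < a) :
    ∃ b > a, shootingMap g1 g2 h m b < c := by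
  have hmh : 0 < (m : ℝ) * h ^ 2 := by positivity
  obtain ⟨x₁, hx₁, hgx₁⟩ := hsurj (c / (m * h ^ 2)) (by positivity)
  set b := max a x₁ + 1
  have hb : 0 < b := by positivity
  have hG : g1 (U g1 h (m + 1) b) / g2 (U g1 h (m + 1) b) < c / (m * h ^ 2) := by
    refine hgx₁ ▸ hdec hx₁ (U_pos hg1_pos hh hb (by omega)) ?_
    linarith [le_max_right a x₁, (le_U_and_U_lt_U_succ hg1_pos hh hb (m + 1) (by omega)).1]
  refine ⟨b, by linarith [le_max_left a x₁], ?_⟩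
  calc _ ≤ _ := shootingMap_le hg1 hg1_pos hg1'_pos hg2_pos hh hb hm
    _ < m * h ^ 2 * (c / (m * h ^ 2)) := mul_lt_mul_of_pos_left hG hmh
    _ = c := by field_simp

theorem exists_shootingMap_eq (hg1 : Differentiable ℝ g1) (hg10 : g1 0 = 0)
    (hg1_pos : ∀ x > 0, 0 < g1 x) (hg1'_pos : ∀ x > 0, 0 < deriv g1 x) (hg2 : Continuous g2)
    (hg2_pos : ∀ x > 0, 0 < g2 x) (hsurj : ∀ y > (0 : ℝ), ∃ x > (0 : ℝ), g1 x / g2 x = y)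
    (hdec : StrictAntiOn (fun x => g1 x / g2 x) (Set.Ioi 0)) (hh : h ≠ 0) (hm : 1 ≤ m)
    {c : ℝ} (hc : 0 < c) :
    ∃ a > 0, shootingMap g1 g2 h m a = c := by
  obtain ⟨a, ha, hca⟩ := exists_lt_shootingMap hg1 hg10 hg1_pos hg2_pos hsurj hdec hh hm hc
  obtain ⟨b, hab, hbc⟩ :=
    exists_shootingMap_lt hg1 hg1_pos hg1'_pos hg2_pos hsurj hdec hh hm hc ha
  obtain ⟨x, hx, hxc⟩ := intermediate_value_Icc' hab.le
    ((continuousOn_shootingMap hg1 hg1_pos hg2 hg2_pos hh).mono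
      fun x hx => ha.trans_le hx.1) ⟨hbc.le, hca.le⟩
  exact ⟨x, ha.trans_le hx.1, hxc⟩

theorem isSolution_of_shootingMap_eq {α : ℝ} (hg1_pos : ∀ x > 0, 0 < g1 x)
    (hg2_pos : ∀ x > 0, 0 < g2 x) (hh : h ≠ 0) (ha : 0 < a) (hm : 1 ≤ m)
    (hΨ : shootingMap g1 g2 h m a = h * α) :
    IsSolution g1 g2 (m + 1) h α (fun k => U g1 h k a) := by
  have hUa : 0 < U g1 h (m + 1) a := U_pos hg1_pos hh ha (by omega)
  refine ⟨fun k hk _ => U_pos hg1_pos hh ha hk, by change a + _ - a = h ^ 2 / 2 * g1 a; ring,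
    fun k hk _ => ?_, ?_⟩
  · obtain ⟨j, rfl⟩ : ∃ j, k = j + 1 := ⟨k - 1, by omega⟩
    simp only [Nat.add_sub_cancel, U_add_two (show 1 ≤ j by omega)]
    ring
  · unfold shootingMap at hΨ
    field_simp [(hg1_pos _ hUa).ne', (hg2_pos _ hUa).ne'] at hΨ
    simp only [Nat.add_sub_cancel]
    linarith

end Shooting

theorem IsSolution.eq_U {g1 g2 : ℝ → ℝ} {n : ℕ} {h α : ℝ} {u : ℕ → ℝ}
    (hu : IsSolution g1 g2 n h α u) : ∀ k, 1 ≤ k → k ≤ n → u k = U g1 h k (u 1)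
  | 1, _, _ => rfl
  | 2, _, _ => by rw [U_two]; linarith [hu.2.1]
  | j + 3, _, _ => by
    have hrec := hu.2.2.1 (j + 2) (by omega) (by omega)
    rw [U_add_two (by omega), ← hu.eq_U (j + 2) (by omega) (by omega),
      ← hu.eq_U (j + 1) (by omega) (by omega)]
    simp only [show j + 2 - 1 = j + 1 by omega] at hrec
    linarith

theorem IsSolution.shootingMap_eq {g1 g2 : ℝ → ℝ} {m : ℕ} {h α : ℝ} {u : ℕ → ℝ}
    (hu : IsSolution g1 g2 (m + 1) h α u) (hg1_pos : ∀ x > 0, 0 < g1 x)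
    (hg2_pos : ∀ x > 0, 0 < g2 x) (hm : 1 ≤ m) :
    shootingMap g1 g2 h m (u 1) = h * α := by
  have hun := hu.1 (m + 1) (by omega) le_rfl
  have hbc := hu.2.2.2
  rw [Nat.add_sub_cancel, hu.eq_U m hm (by omega), hu.eq_U (m + 1) (by omega) le_rfl] at hbc
  rw [hu.eq_U (m + 1) (by omega) le_rfl] at hun
  unfold shootingMap
  field_simp [(hg1_pos _ hun).ne', (hg2_pos _ hun).ne']
  linarith

theorem stmt11_general
    (g1 g2 : ℝ → ℝ)
    (hg1C : ContDiff ℝ 3 g1) (hg2C : ContDiff ℝ 3 g2)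
    (hg10 : g1 0 = 0) (hg20 : g2 0 = 0)
    (hg1d1 : ∀ x > 0, 0 < deriv g1 x) (hg2d1 : ∀ x > 0, 0 < deriv g2 x)
    (hg1d2 : ∀ x > 0, 0 < iteratedDeriv 2 g1 x)
    (n : ℕ) (hn : 2 ≤ n) (h : ℝ) (hh : h = 1 / ((n : ℝ) - 1))
    (α : ℝ) (hα : 0 < α)
    (hsurj : ∀ y > (0 : ℝ), ∃ x > (0 : ℝ), g1 x / g2 x = y)
    (hdec : StrictAntiOn (fun x => g1 x / g2 x) (Set.Ioi 0)) :
    (∃ u : ℕ → ℝ, IsSolution g1 g2 n h α u) ∧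
    ∀ u v : ℕ → ℝ, IsSolution g1 g2 n h α u → IsSolution g1 g2 n h α v →
      ∀ k, 1 ≤ k → k ≤ n → u k = v k := by
  obtain ⟨m, rfl⟩ : ∃ m, n = m + 1 := ⟨n - 1, by omega⟩
  have hm : 1 ≤ m := by omega
  have hh0 : 0 < h := by
    rw [hh, Nat.cast_add_one, add_sub_cancel_right]
    exact one_div_pos.2 (by exact_mod_cast hm)
  have hg1 : Differentiable ℝ g1 := hg1C.differentiable (by norm_num)
  have hg1_pos := pos_of_deriv_pos hg1.continuous hg10 hg1d1
  have hg2_pos := pos_of_deriv_pos hg2C.continuous hg20 hg2d1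
  have hg1_conv : StrictConvexOn ℝ (Set.Ioi 0) g1 :=
    strictConvexOn_of_deriv2_pos (convex_Ioi 0) hg1.continuous.continuousOn fun x hx => by
      rw [interior_Ioi] at hx
      simpa [iteratedDeriv_eq_iterate] using hg1d2 x hx
  refine ⟨?_, fun u v hu hv k hk1 hkn => ?_⟩
  · obtain ⟨a, ha, hΨ⟩ := exists_shootingMap_eq hg1 hg10 hg1_pos hg1d1 hg2C.continuous hg2_pos
      hsurj hdec hh0.ne' hm (mul_pos hh0 hα)
    exact ⟨_, isSolution_of_shootingMap_eq hg1_pos hg2_pos hh0.ne' ha hm hΨ⟩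
  · have hu1v1 : u 1 = v 1 :=
      (shootingMap_strictAntiOn hg1 hg1_pos hg1d1 hg1_conv hg2_pos hdec hh0.ne' hm).injOn
        (hu.1 1 le_rfl (by omega)) (hv.1 1 le_rfl (by omega))
        ((hu.shootingMap_eq hg1_pos hg2_pos hm).trans (hv.shootingMap_eq hg1_pos hg2_pos hm).symm)
    rw [hu.eq_U k hk1 hkn, hv.eq_U k hk1 hkn, hu1v1]

theorem stmt11
    (g1 g2 : ℝ → ℝ)
    (hg1C : ContDiff ℝ 3 g1) (hg2C : ContDiff ℝ 3 g2)
    (hg1A : AnalyticAt ℝ g1 0) (hg2A : AnalyticAt ℝ g2 0)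
    (hg10 : g1 0 = 0) (hg20 : g2 0 = 0)
    (hg1d1 : ∀ x > 0, 0 < deriv g1 x) (hg2d1 : ∀ x > 0, 0 < deriv g2 x)
    (hg1d2 : ∀ x > 0, 0 < iteratedDeriv 2 g1 x) (hg2d2 : ∀ x > 0, 0 < iteratedDeriv 2 g2 x)
    (hg1d3 : ∀ x > 0, 0 ≤ iteratedDeriv 3 g1 x) (hg2d3 : ∀ x > 0, 0 ≤ iteratedDeriv 3 g2 x)
    (n : ℕ) (hn : 2 ≤ n) (h : ℝ) (hh : h = 1 / ((n : ℝ) - 1))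
    (α : ℝ) (hα : 0 < α)
    (hsurj : ∀ y > (0 : ℝ), ∃ x > (0 : ℝ), g1 x / g2 x = y)
    (hdec : StrictAntiOn (fun x => g1 x / g2 x) (Set.Ioi 0)) :
    (∃ u : ℕ → ℝ, IsSolution g1 g2 n h α u) ∧
    ∀ u v : ℕ → ℝ, IsSolution g1 g2 n h α u → IsSolution g1 g2 n h α v →
      ∀ k, 1 ≤ k → k ≤ n → u k = v k :=
  stmt11_general g1 g2 hg1C hg2C hg10 hg20 hg1d1 hg2d1 hg1d2 n hn h hh α hα hsurj hdec
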